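/- Let β > α > 0 and r ∈ ℝ with |r| ≠ √(αβ). Then the minimizer of w ↦ (1/(2β))(r − w)² + ρ_α(w) over ℝ is unique and given by the hard thresholding operator: 0 if |r| < √(αβ) and r if |r| > √(αβ). -/

import Mathlib

noncomputable def mcp (α w : ℝ) : ℝ :=
  if |w| ≤ α then |w| - w ^ 2 / (2 * α) else α / 2

/-!
Write `t = |v|`. For `|v| ≤ α`, `2αβ` times the gap between the objective at `v` and at the
candidate minimizer is at least `t (2α(β - c) - (β - α) t)`, with `c = |r|` when the candidate
is `0` (using `r v ≤ |r| t`) and `c = √(αβ)` when it is `r` (using `|r - v| > √(αβ) - t`). As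
`t ≤ α ≤ β` this is at least `t α (α + β - 2c)`, which AM–GM `2√(αβ) ≤ α + β` makes nonnegative.
For `|v| > α` the penalty is flat at `α / 2` and the comparison is immediate.
-/

lemma setOf_forall_le_eq_singleton {X Y : Type*} [LinearOrder Y] {f : X → Y} {a : X}
    (h : ∀ v, v ≠ a → f a < f v) : {w | ∀ v, f w ≤ f v} = {a} := by
  ext w
  refine ⟨fun hw => ?_, fun hw v => ?_⟩
  · by_contra hwa
    exact (h w hwa).not_ge (hw a)
  · rw [hw]
    rcases eq_or_ne v a with rfl | hva
    · exact le_rfl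
    · exact (h v hva).le

lemma two_mul_sqrt_mul_le_add {α β : ℝ} (hα : 0 ≤ α) (hβ : 0 ≤ β) :
    2 * Real.sqrt (α * β) ≤ α + β := by
  have hs := Real.sq_sqrt (mul_nonneg hα hβ)
  nlinarith [Real.sqrt_nonneg (α * β), sq_nonneg (α - β), sq_nonneg (2 * Real.sqrt (α * β) - α - β)]

lemma mul_mul_add_sub_le_of_le {α β c t : ℝ} (hαβ : α ≤ β) (ht : 0 ≤ t) (htα : t ≤ α) :
    t * α * (α + β - 2 * c) ≤ t * (2 * α * (β - c) - (β - α) * t) := by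
  nlinarith [mul_nonneg (mul_nonneg ht (sub_nonneg.2 hαβ)) (sub_nonneg.2 htα)]

lemma lt_sqrt_mul_self_of_lt {α β : ℝ} (hα : 0 < α) (hαβ : α < β) : α < Real.sqrt (α * β) :=
  Real.lt_sqrt_of_sq_lt (by nlinarith)

namespace mcp

variable {α w : ℝ}

lemma of_abs_le (h : |w| ≤ α) : mcp α w = |w| - w ^ 2 / (2 * α) := if_pos h

lemma of_lt_abs (h : α < |w|) : mcp α w = α / 2 := if_neg h.not_ge

lemma zero (hα : 0 ≤ α) : mcp α 0 = 0 := by simp [mcp, hα]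

end mcp

noncomputable def mcpProxObjective (α β r w : ℝ) : ℝ :=
  1 / (2 * β) * (r - w) ^ 2 + mcp α w

namespace mcpProxObjective

variable {α β r v : ℝ}

lemma zero_lt_of_lt_abs (hα : 0 < α) (hβ : 0 < β) (hr : |r| < Real.sqrt (α * β))
    (hv : α < |v|) : mcpProxObjective α β r 0 < mcpProxObjective α β r v := by
  have hr2 : r ^ 2 < α * β := by
    simpa only [sq_abs] using (Real.lt_sqrt (abs_nonneg r)).1 hr
  have hgap : r ^ 2 < (r - v) ^ 2 + α * β := by nlinarith [sq_nonneg (r - v)]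
  rw [mcpProxObjective, mcpProxObjective, mcp.zero hα.le, mcp.of_lt_abs hv, sub_zero]
  field_simp
  linarith

lemma zero_lt_of_abs_le (hα : 0 < α) (hαβ : α < β) (hr : |r| < Real.sqrt (α * β))
    (hv0 : v ≠ 0) (hv : |v| ≤ α) :
    mcpProxObjective α β r 0 < mcpProxObjective α β r v := by
  have hβ : 0 < β := hα.trans hαβ
  have hr2 : 2 * |r| < α + β := by linarith [two_mul_sqrt_mul_le_add hα.le hβ.le]
  have ht : 0 < |v| := abs_pos.2 hv0
  have hgap : 0 < |v| * α * (α + β - 2 * |r|) := by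
    have := sub_pos.2 hr2
    positivity
  have hrv : r * v ≤ |r| * |v| := (le_abs_self _).trans (abs_mul r v).le
  have hvv : v ^ 2 = |v| ^ 2 := (sq_abs v).symm
  have hdiff : mcpProxObjective α β r v - mcpProxObjective α β r 0 =
      (α * (v ^ 2 - 2 * r * v) + 2 * α * β * |v| - β * v ^ 2) / (2 * α * β) := by
    rw [mcpProxObjective, mcpProxObjective, mcp.zero hα.le, mcp.of_abs_le hv]
    field_simp
    ring
  have hnum : 0 < α * (v ^ 2 - 2 * r * v) + 2 * α * β * |v| - β * v ^ 2 := by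
    nlinarith [mul_mul_add_sub_le_of_le (c := |r|) hαβ.le ht.le hv]
  have := div_pos hnum (by positivity : (0 : ℝ) < 2 * α * β)
  linarith

lemma self_lt_of_lt_abs (hβ : 0 < β) (hr : α < |r|) (hv : α < |v|) (hvr : v ≠ r) :
    mcpProxObjective α β r r < mcpProxObjective α β r v := by
  have hrv : 0 < (r - v) ^ 2 := sq_pos_of_ne_zero (sub_ne_zero.2 hvr.symm)
  rw [mcpProxObjective, mcpProxObjective, mcp.of_lt_abs hr, mcp.of_lt_abs hv, sub_self]
  have := mul_pos (one_div_pos.2 (mul_pos two_pos hβ)) hrv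
  simpa using this

lemma self_lt_of_abs_le (hα : 0 < α) (hαβ : α < β) (hr : Real.sqrt (α * β) < |r|)
    (hv : |v| ≤ α) :
    mcpProxObjective α β r r < mcpProxObjective α β r v := by
  have hβ : 0 < β := hα.trans hαβ
  set s := Real.sqrt (α * β)
  have hs : s ^ 2 = α * β := Real.sq_sqrt (by positivity)
  have hαs : α < s := lt_sqrt_mul_self_of_lt hα hαβ
  have hr_v : s - |v| < |r - v| := by linarith [abs_sub_abs_le_abs_sub r v]
  have hsq : (s - |v|) ^ 2 < (r - v) ^ 2 := by
    rw [← sq_abs (r - v)]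
    exact pow_lt_pow_left₀ hr_v (by linarith) two_ne_zero
  have hgap : 0 ≤ |v| * α * (α + β - 2 * s) := by
    have := two_mul_sqrt_mul_le_add hα.le hβ.le
    have := abs_nonneg v
    have : 0 ≤ α + β - 2 * s := by linarith
    positivity
  have hvv : v ^ 2 = |v| ^ 2 := (sq_abs v).symm
  have hdiff : mcpProxObjective α β r v - mcpProxObjective α β r r =
      (α * (r - v) ^ 2 - β * (α - |v|) ^ 2) / (2 * α * β) := by
    rw [mcpProxObjective, mcpProxObjective, mcp.of_lt_abs (hαs.trans hr), mcp.of_abs_le hv]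
    field_simp
    linear_combination (-β) * hvv
  have hnum : 0 < α * (r - v) ^ 2 - β * (α - |v|) ^ 2 := by
    nlinarith [mul_mul_add_sub_le_of_le (c := s) hαβ.le (abs_nonneg v) hv]
  have := div_pos hnum (by positivity : (0 : ℝ) < 2 * α * β)
  linarith

lemma zero_lt_of_abs_lt_sqrt (hα : 0 < α) (hαβ : α < β) (hr : |r| < Real.sqrt (α * β))
    (hv : v ≠ 0) : mcpProxObjective α β r 0 < mcpProxObjective α β r v := by
  rcases le_or_gt |v| α with hvα | hvα
  · exact zero_lt_of_abs_le hα hαβ hr hv hvα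
  · exact zero_lt_of_lt_abs hα (hα.trans hαβ) hr hvα

lemma self_lt_of_sqrt_lt_abs (hα : 0 < α) (hαβ : α < β) (hr : Real.sqrt (α * β) < |r|)
    (hv : v ≠ r) : mcpProxObjective α β r r < mcpProxObjective α β r v := by
  rcases le_or_gt |v| α with hvα | hvα
  · exact self_lt_of_abs_le hα hαβ hr hvα
  · exact self_lt_of_lt_abs (hα.trans hαβ) ((lt_sqrt_mul_self_of_lt hα hαβ).trans hr) hvα hv

end mcpProxObjective

theorem prox_mcp_hard (α β : ℝ) (hα : 0 < α) (hαβ : α < β) (r : ℝ)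
    (hr : |r| ≠ Real.sqrt (α * β)) :
    {w : ℝ | ∀ v : ℝ, 1 / (2 * β) * (r - w) ^ 2 + mcp α w ≤
        1 / (2 * β) * (r - v) ^ 2 + mcp α v} =
      {if |r| < Real.sqrt (α * β) then 0 else r} := by
  change {w | ∀ v, mcpProxObjective α β r w ≤ mcpProxObjective α β r v} = _
  apply setOf_forall_le_eq_singleton
  rcases hr.lt_or_gt with hlt | hgt
  · rw [if_pos hlt]
    exact fun v hv => mcpProxObjective.zero_lt_of_abs_lt_sqrt hα hαβ hlt hv
  · rw [if_neg hgt.not_gt]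
    exact fun v hv => mcpProxObjective.self_lt_of_sqrt_lt_abs hα hαβ hgt hv
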